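/- arXiv:2604.26183 — 5 statements merged into one kernel-verified Lean document; each statement's English description precedes it below -/
import Mathlib

section
/- Let U₀ be the t×t upper-triangular matrix with diagonal entries U₀(i,i)=t−i and all entries above the diagonal equal to 1. Then U₀ᵀ·U₀ ≡ (t−1)·N (mod 2), where N is the all-ones t×t matrix. -/
/-- `U₀`: the `t × t` upper-triangular integer matrix with diagonal entries `t − i`
(`1`-indexed) and entries above the diagonal `1`. -/
def U0 (t : ℕ) : Matrix (Fin t) (Fin t) ℤ :=
  Matrix.of fun i j =>
    if i = j then (t : ℤ) - (i : ℤ) - 1 else if i < j then 1 else 0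

lemma U0_sum (t : ℕ) (i j : Fin t) (h : i ≤ j) :
    ∑ k : Fin t, U0 t k i * U0 t k j =
      (i : ℤ) + ((t : ℤ) - i - 1) * (if i = j then (t : ℤ) - i - 1 else 1) := by
  have : ∀ k : Fin t, U0 t k i * U0 t k j =
      (if k = i then ((t : ℤ) - i - 1) * (if i = j then (t : ℤ) - i - 1 else 1) else 0)
        + (if k < i then 1 else 0) := by
    intro k
    rcases lt_trichotomy k i with hk | hk | hk
    · have h1 : U0 t k i = 1 := by
        simp [U0, hk.ne, hk]
      have h2 : U0 t k j = 1 := by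
        have : k < j := lt_of_lt_of_le hk h
        simp [U0, this.ne, this]
      simp [h1, h2, hk.ne, hk]
    · subst hk
      have h1 : U0 t k k = (t : ℤ) - k - 1 := by simp [U0]
      have h2 : U0 t k j = if k = j then (t : ℤ) - k - 1 else 1 := by
        rcases eq_or_lt_of_le h with he | hl
        · simp [U0, he]
        · simp [U0, hl.ne, hl]
      simp [h1, h2]
    · have h1 : U0 t k i = 0 := by
        simp [U0, hk.ne', not_lt.2 hk.le]
      simp [h1, hk.ne', not_lt.2 hk.le]
  rw [Finset.sum_congr rfl fun k _ => this k, Finset.sum_add_distrib,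
    Finset.sum_ite_eq' Finset.univ i, Finset.sum_ite, Finset.sum_const, Finset.sum_const]
  simp only [Finset.mem_univ, if_true, nsmul_eq_mul, mul_one, mul_zero, add_zero]
  have : (Finset.filter (fun k : Fin t => k < i) Finset.univ).card = i := by
    rw [show Finset.filter (fun k : Fin t => k < i) Finset.univ = Finset.Iio i by
      ext k; simp]
    exact Fin.card_Iio i
  rw [this]
  ring

/-- `U₀ᵀ·U₀ ≡ (t−1)·N (mod 2)` entrywise, `N` the all-ones matrix. -/
theorem U0_transpose_mul_U0 (t : ℕ) :
    ∀ i j : Fin t,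
      ((U0 t).transpose * U0 t) i j ≡
        (((t : ℤ) - 1) • (Matrix.of fun _ _ => (1 : ℤ)) : Matrix (Fin t) (Fin t) ℤ) i j
          [ZMOD 2] := by
  have key : ∀ i j : Fin t, i ≤ j →
      (∑ k : Fin t, U0 t k i * U0 t k j) ≡ (t : ℤ) - 1 [ZMOD 2] := by
    intro i j h
    rw [U0_sum t i j h]
    set x : ℤ := (t : ℤ) - i - 1 with hx
    have hxsq : x * x ≡ x [ZMOD 2] := by
      have : (2 : ℤ) ∣ x * x - x := by
        have : Even (x * x - x) := by
          have := Int.even_mul_succ_self (x - 1)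
          simpa [mul_comm, mul_sub, sub_mul] using this
        exact this.two_dvd
      exact Int.ModEq.symm ((Int.modEq_iff_dvd.2 (by simpa using this)))
    have h2 : x * (if i = j then x else 1) ≡ x [ZMOD 2] := by
      split
      · exact hxsq
      · simp
    have := (Int.ModEq.refl (i : ℤ)).add h2
    calc (i : ℤ) + x * (if i = j then x else 1) ≡ (i:ℤ) + x [ZMOD 2] := this
      _ = (t : ℤ) - 1 := by rw [hx]; ring
  intro i j
  simp only [Matrix.mul_apply, Matrix.transpose_apply, Matrix.smul_apply, Matrix.of_apply,
    smul_eq_mul, mul_one]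
  rcases le_total i j with h | h
  · exact key i j h
  · have := key j i h
    simpa [mul_comm] using this
end

section
/- Let U₀ be the t×t upper-triangular matrix with diagonal entries t−i and all entries above the diagonal equal to 1. Then U₀·U₀ᵀ ≡ O (mod 2), i.e., every entry of U₀·U₀ᵀ is even. -/
lemma U0_key (t : ℕ) (i j : Fin t) (h : i ≤ j) :
    (2 : ℤ) ∣ (U0 t * (U0 t).transpose) i j := by
  rw [show (2:ℤ) = ((2:ℕ):ℤ) from rfl, ← ZMod.intCast_zmod_eq_zero_iff_dvd]
  simp only [Matrix.mul_apply, Matrix.transpose_apply]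
  push_cast
  have hvanish : ∀ k ∈ Finset.univ, k ∉ Finset.Ici j →
      ((U0 t i k : ZMod 2) * (U0 t j k : ZMod 2)) = 0 := by
    intro k _ hk
    rw [Finset.mem_Ici] at hk
    push_neg at hk
    have h1 : U0 t j k = 0 := by
      simp only [U0, Matrix.of_apply]
      rw [if_neg hk.ne', if_neg (lt_asymm hk)]
    simp [h1]
  rw [← Finset.sum_subset (Finset.subset_univ (Finset.Ici j)) hvanish]
  rw [Finset.Ici_eq_cons_Ioi, Finset.sum_cons]
  have htail : ∑ k ∈ Finset.Ioi j, ((U0 t i k : ZMod 2) * (U0 t j k : ZMod 2))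
      = (Finset.Ioi j).card := by
    rw [Finset.card_eq_sum_ones, Nat.cast_sum]
    refine Finset.sum_congr rfl fun k hk => ?_
    rw [Finset.mem_Ioi] at hk
    have hik : i < k := lt_of_le_of_lt h hk
    have e1 : U0 t i k = 1 := by
      simp only [U0, Matrix.of_apply]
      rw [if_neg hik.ne, if_pos hik]
    have e2 : U0 t j k = 1 := by
      simp only [U0, Matrix.of_apply]
      rw [if_neg hk.ne, if_pos hk]
    simp [e1, e2]
  rw [htail, Fin.card_Ioi]
  have hjt : (j : ℕ) + 1 ≤ t := j.2
  have hcard : ((t - 1 - (j : ℕ) : ℕ) : ZMod 2) = (t : ZMod 2) - (j : ZMod 2) - 1 := by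
    have : t - 1 - (j : ℕ) = t - ((j : ℕ) + 1) := by omega
    rw [this, Nat.cast_sub hjt]
    push_cast
    ring
  have hd : (U0 t j j : ZMod 2) = (t : ZMod 2) - (j : ZMod 2) - 1 := by
    simp only [U0, Matrix.of_apply, if_pos rfl]
    push_cast
    ring
  rw [hcard, hd]
  rcases eq_or_lt_of_le h with heq | hlt
  · subst heq
    rw [hd]
    have : ∀ y : ZMod 2, y * y + y = 0 := by decide
    exact this _
  · have e1 : U0 t i j = 1 := by
      simp only [U0, Matrix.of_apply]
      rw [if_neg hlt.ne, if_pos hlt]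
    rw [e1]
    have : ∀ y : ZMod 2, (1 : ZMod 2) * y + y = 0 := by decide
    exact this _

/-- every entry of `U₀·U₀ᵀ` is even, i.e. `U₀·U₀ᵀ ≡ O (mod 2)`. -/
theorem U0_mul_transpose_even (t : ℕ) :
    ∀ i j : Fin t, (2 : ℤ) ∣ (U0 t * (U0 t).transpose) i j := by
  intro i j
  rcases le_total i j with h | h
  · exact U0_key t i j h
  · have hsym : (U0 t * (U0 t).transpose) i j = (U0 t * (U0 t).transpose) j i := by
      have hT : (U0 t * (U0 t).transpose).transpose = U0 t * (U0 t).transpose := by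
        rw [Matrix.transpose_mul, Matrix.transpose_transpose]
      calc (U0 t * (U0 t).transpose) i j
          = (U0 t * (U0 t).transpose).transpose j i :=
            (Matrix.transpose_apply _ j i).symm
        _ = (U0 t * (U0 t).transpose) j i := by rw [hT]
    rw [hsym]
    exact U0_key t j i h
end

section
/- Let U₀ be the t×t upper-triangular matrix with diagonal entries t−i and entries above the diagonal 1, and let U_t = U₀ + t·I. Then U_tᵀ·U_t ≡ N (mod 2), where N is the all-ones t×t matrix. -/
lemma Ut_entry_cast (t : ℕ) (k i : Fin t) :
    (((U0 t + (t : ℤ) • (1 : Matrix (Fin t) (Fin t) ℤ)) k i : ℤ) : ZMod 2) =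
      if k < i then 1 else if k = i then (i : ZMod 2) + 1 else 0 := by
  have h2 : ((2 : ℤ) : ZMod 2) = 0 := by decide
  simp only [Matrix.add_apply, Matrix.smul_apply, Matrix.one_apply, U0, Matrix.of_apply]
  rcases lt_trichotomy k i with h | h | h
  · simp [h, h.ne, h.ne']
  · subst h
    simp only [if_pos rfl, lt_irrefl, if_false, if_true, smul_eq_mul, mul_one]
    have : ((k : ZMod 2) + 1) = (((k : ℤ) + 1 : ℤ) : ZMod 2) := by push_cast; ring
    rw [this, ZMod.intCast_eq_intCast_iff]
    simp only [Int.ModEq]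
    omega
  · simp [h.ne', not_lt.mpr h.le, h.not_gt]

lemma aux_sum (t : ℕ) (i j : Fin t) (h : i ≤ j) :
    (∑ k : Fin t, (((U0 t + (t : ℤ) • (1 : Matrix (Fin t) (Fin t) ℤ)) k i : ℤ) : ZMod 2) *
      (((U0 t + (t : ℤ) • (1 : Matrix (Fin t) (Fin t) ℤ)) k j : ℤ) : ZMod 2)) = 1 := by
  have hterm : ∀ k : Fin t,
      (((U0 t + (t : ℤ) • (1 : Matrix (Fin t) (Fin t) ℤ)) k i : ℤ) : ZMod 2) *
      (((U0 t + (t : ℤ) • (1 : Matrix (Fin t) (Fin t) ℤ)) k j : ℤ) : ZMod 2) =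
      (if k < i then 1 else 0) + (if k = i then (i : ZMod 2) + 1 else 0) := by
    intro k
    rw [Ut_entry_cast, Ut_entry_cast]
    rcases lt_trichotomy k i with hk | hk | hk
    · have hkj : k < j := lt_of_lt_of_le hk h
      simp [hk, hk.ne, hkj]
    · subst hk
      simp only [lt_irrefl, if_false, if_pos rfl, if_true, zero_add]
      rcases eq_or_lt_of_le h with hij | hij
      · subst hij
        simp only [lt_irrefl, if_false, if_pos rfl]
        have : ∀ x : ZMod 2, (x + 1) * (x + 1) = x + 1 := by decide
        exact this _
      · simp [hij, hij.ne]
    · have : ¬ k < i := not_lt.mpr hk.le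
      simp [this, hk.ne']
  rw [Finset.sum_congr rfl fun k _ => hterm k, Finset.sum_add_distrib,
    Finset.sum_ite_eq' Finset.univ i (fun _ => (i : ZMod 2) + 1), if_pos (Finset.mem_univ i)]
  have h1 : (∑ x : Fin t, if x < i then (1 : ZMod 2) else 0) = ((i : ℕ) : ZMod 2) := by
    rw [Finset.sum_ite, Finset.sum_const, Finset.sum_const_zero, add_zero, nsmul_eq_mul, mul_one,
      show Finset.univ.filter (fun x : Fin t => x < i) = Finset.Iio i from by ext k; simp,
      Fin.card_Iio]
  rw [h1]
  have : ∀ x : ZMod 2, x + (x + 1) = 1 := by decide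
  exact this _

/-- with `U_t = U₀ + t·I`, we have `U_tᵀ·U_t ≡ N (mod 2)` entrywise. -/
theorem Ut_transpose_mul_Ut (t : ℕ) :
    let Ut : Matrix (Fin t) (Fin t) ℤ := U0 t + (t : ℤ) • (1 : Matrix (Fin t) (Fin t) ℤ)
    ∀ i j : Fin t,
      (Ut.transpose * Ut) i j ≡ ((Matrix.of fun _ _ => (1 : ℤ)) : Matrix (Fin t) (Fin t) ℤ) i j
        [ZMOD 2] := by
  intro Ut i j
  refine (ZMod.intCast_eq_intCast_iff _ _ 2).mp ?_
  simp only [Matrix.mul_apply, Matrix.transpose_apply, Matrix.of_apply, Int.cast_sum,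
    Int.cast_mul, Int.cast_one]
  rcases le_total i j with h | h
  · exact aux_sum t i j h
  · rw [Finset.sum_congr rfl (fun k _ => mul_comm _ _)]
    exact aux_sum t j i h
end

section
/- Let U₀ be the t×t upper-triangular matrix with diagonal entries t−i and entries above the diagonal equal to 1. Then U₀² ≡ U₀ (mod 2); that is, the reduction of U₀ modulo 2 is an idempotent matrix over 𝔽₂. -/
/-- `U₀² ≡ U₀ (mod 2)` entrywise; the reduction of `U₀` mod `2` is
idempotent over `𝔽₂`. -/
theorem U0_sq (t : ℕ) :
    ∀ i j : Fin t, (U0 t * U0 t) i j ≡ (U0 t) i j [ZMOD 2] := by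
  intro i j
  rw [Matrix.mul_apply]
  rcases lt_trichotomy i j with h | h | h
  · -- i < j
    have hterm : ∀ k : Fin t, U0 t i k * U0 t k j
        = (if k = i then (t:ℤ) - i - 1 else 0)
          + ((if k = j then (t:ℤ) - j - 1 else 0)
          + (if k ∈ Finset.Ioo i j then (1:ℤ) else 0)) := by
      intro k
      simp only [U0, Matrix.of_apply, Finset.mem_Ioo]
      split_ifs <;> first
        | (exfalso; simp only [Fin.lt_def, Fin.ext_iff, not_and, not_lt] at *; omega)
        | (subst_vars; ring1)
    rw [Finset.sum_congr rfl (fun k _ => hterm k), Finset.sum_add_distrib,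
      Finset.sum_add_distrib]
    simp only [Finset.sum_ite_eq', Finset.mem_univ, if_true, Finset.sum_boole,
      Finset.filter_univ_mem]
    have hcard : ((Finset.Ioo i j).card : ℤ) = (j:ℤ) - i - 1 := by
      rw [Fin.card_Ioo]
      have hn : (i:ℕ) < j := h
      omega
    rw [hcard]
    have hij : (U0 t) i j = 1 := by
      have hne : i ≠ j := ne_of_lt h
      simp [U0, h, hne]
    rw [hij]
    simp only [Int.ModEq]
    omega
  · -- i = j
    subst h
    have hterm : ∀ k : Fin t, U0 t i k * U0 t k i
        = if k = i then ((t:ℤ) - i - 1) * ((t:ℤ) - i - 1) else 0 := by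
      intro k
      simp only [U0, Matrix.of_apply]
      split_ifs <;> first
        | (exfalso; simp only [Fin.lt_def, Fin.ext_iff, not_lt] at *; omega)
        | (subst_vars; ring1)
    rw [Finset.sum_congr rfl (fun k _ => hterm k)]
    simp only [Finset.sum_ite_eq', Finset.mem_univ, if_true]
    have hii : (U0 t) i i = (t:ℤ) - i - 1 := by simp [U0]
    rw [hii]
    set a : ℤ := (t:ℤ) - i - 1
    show a * a % 2 = a % 2
    rw [Int.mul_emod]
    rcases Int.emod_two_eq a with h2 | h2 <;> rw [h2] <;> norm_num
  · -- j < i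
    have hterm : ∀ k : Fin t, U0 t i k * U0 t k j = 0 := by
      intro k
      simp only [U0, Matrix.of_apply]
      split_ifs <;> first
        | (exfalso; simp only [Fin.lt_def, Fin.ext_iff, not_lt] at *; omega)
        | ring1
    rw [Finset.sum_congr rfl (fun k _ => hterm k)]
    have hij : (U0 t) i j = 0 := by
      have hne : i ≠ j := ne_of_gt h
      have hnl : ¬ i < j := not_lt_of_gt h
      simp [U0, hne, hnl]
    rw [hij]
    simp
end

section
/- Let L₀ be the t×t lower-triangular matrix with diagonal entries i−1 and entries below the diagonal 1. Then L₀² ≡ L₀ (mod 2), L₀ᵀ + L₀ ≡ N + I (mod 2), and L₀ᵀ·L₀ ≡ (t−1)·N (mod 2). -/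
/-- `L₀`: the `t × t` lower-triangular integer matrix with diagonal entries `i − 1`
(`1`-indexed, i.e. `i` in `0`-indexed form) and entries below the diagonal `1`. -/
def L0 (t : ℕ) : Matrix (Fin t) (Fin t) ℤ :=
  Matrix.of fun i j =>
    if i = j then (i : ℤ) else if j < i then 1 else 0

lemma two_eq_zero' : (2 : ZMod 2) = 0 := rfl

lemma cast_L0 (t : ℕ) (i k : Fin t) :
    ((L0 t i k : ℤ) : ZMod 2) =
      (if k = i then ((i : ℕ) : ZMod 2) + 1 else 0) + (if k ≤ i then 1 else 0) := by
  simp only [L0, Matrix.of_apply]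
  rcases lt_trichotomy k i with h | h | h
  · rw [if_neg (by intro e; subst e; exact lt_irrefl _ h), if_pos h,
      if_neg (by intro e; subst e; exact lt_irrefl _ h), if_pos h.le]
    push_cast; ring
  · subst h
    rw [if_pos rfl, if_pos rfl, if_pos le_rfl]
    push_cast
    linear_combination -two_eq_zero'
  · rw [if_neg (by intro e; subst e; exact lt_irrefl _ h),
      if_neg (not_lt.mpr h.le),
      if_neg (by intro e; subst e; exact lt_irrefl _ h),
      if_neg (not_le.mpr h)]
    push_cast; ring

lemma cast_L0T (t : ℕ) (i k : Fin t) :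
    ((L0 t k i : ℤ) : ZMod 2) =
      (if k = i then ((i : ℕ) : ZMod 2) + 1 else 0) + (if i ≤ k then 1 else 0) := by
  simp only [L0, Matrix.of_apply]
  rcases lt_trichotomy k i with h | h | h
  · rw [if_neg (by intro e; subst e; exact lt_irrefl _ h),
      if_neg (not_lt.mpr h.le),
      if_neg (by intro e; subst e; exact lt_irrefl _ h),
      if_neg (not_le.mpr h)]
    push_cast; ring
  · subst h
    rw [if_pos rfl, if_pos rfl, if_pos le_rfl]
    push_cast
    linear_combination -two_eq_zero'
  · rw [if_neg (by intro e; subst e; exact lt_irrefl _ h), if_pos h,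
      if_neg (by intro e; subst e; exact lt_irrefl _ h), if_pos h.le]
    push_cast; ring

lemma sum_ind_ind (t : ℕ) (i j : Fin t) :
    (∑ k : Fin t, (if k ≤ i then (1 : ZMod 2) else 0) * (if j ≤ k then 1 else 0))
      = (((i : ℕ) + 1 - (j : ℕ) : ℕ) : ZMod 2) := by
  have h : ∀ k : Fin t, (if k ≤ i then (1 : ZMod 2) else 0) * (if j ≤ k then 1 else 0)
      = if j ≤ k ∧ k ≤ i then 1 else 0 := by
    intro k; split_ifs with h1 h2 h3 <;> simp_all
  rw [Finset.sum_congr rfl fun k _ => h k, Finset.sum_boole]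
  congr 1
  have h2 : Finset.filter (fun k => j ≤ k ∧ k ≤ i) Finset.univ = Finset.Icc j i := by
    ext k; simp [Finset.mem_Icc]
  rw [h2, Fin.card_Icc]

lemma sum_ind_ind' (t : ℕ) (i j : Fin t) :
    (∑ k : Fin t, (if i ≤ k then (1 : ZMod 2) else 0) * (if j ≤ k then 1 else 0))
      = ((t - max (i : ℕ) (j : ℕ) : ℕ) : ZMod 2) := by
  have h : ∀ k : Fin t, (if i ≤ k then (1 : ZMod 2) else 0) * (if j ≤ k then 1 else 0)
      = if max i j ≤ k then 1 else 0 := by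
    intro k; simp only [max_le_iff]; split_ifs with h1 h2 h3 <;> simp_all
  rw [Finset.sum_congr rfl fun k _ => h k, Finset.sum_boole]
  have h2 : Finset.filter (fun k => max i j ≤ k) Finset.univ = Finset.Ici (max i j) := by
    ext k; simp
  rw [h2, Fin.card_Ici]
  have h3 : ((max i j : Fin t) : ℕ) = max (i : ℕ) (j : ℕ) := by
    rcases le_total i j with h | h <;>
      simp only [max_eq_right h, max_eq_left h] <;>
      [rw [max_eq_right]; rw [max_eq_left]] <;> exact h
  rw [h3]

lemma sum_delta_cond (t : ℕ) (i j : Fin t) (a : ZMod 2) :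
    (∑ k : Fin t, if j ≤ k then if k = i then a else 0 else 0)
      = if j ≤ i then a else 0 := by
  have h : ∀ k : Fin t, (if j ≤ k then if k = i then a else 0 else 0)
      = if k = i then (if j ≤ k then a else 0) else 0 := by
    intro k; split_ifs <;> rfl
  rw [Finset.sum_congr rfl fun k _ => h k,
    Finset.sum_ite_eq' Finset.univ i (fun k => if j ≤ k then a else 0),
    if_pos (Finset.mem_univ i)]

/-- `L₀² ≡ L₀ (mod 2)`, `L₀ᵀ + L₀ ≡ N + I (mod 2)`, and
`L₀ᵀ·L₀ ≡ (t−1)·N (mod 2)` entrywise, where `N` is the all-ones matrix. -/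
theorem L0_relations (t : ℕ) :
    let N : Matrix (Fin t) (Fin t) ℤ := Matrix.of fun _ _ => 1
    (∀ i j : Fin t, (L0 t * L0 t) i j ≡ (L0 t) i j [ZMOD 2]) ∧
    (∀ i j : Fin t,
      ((L0 t).transpose + L0 t) i j ≡ (N + (1 : Matrix (Fin t) (Fin t) ℤ)) i j [ZMOD 2]) ∧
    (∀ i j : Fin t,
      ((L0 t).transpose * L0 t) i j ≡ (((t : ℤ) - 1) • N) i j [ZMOD 2]) := by
  intro N
  have hi2 : ∀ a b : ℤ, ((a : ZMod 2) = b) → a ≡ b [ZMOD 2] := fun a b h =>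
    (ZMod.intCast_eq_intCast_iff a b 2).mp h
  refine ⟨?_, ?_, ?_⟩
  · intro i j
    apply hi2
    rw [Matrix.mul_apply]
    push_cast
    rw [Finset.sum_congr rfl (fun k _ => by
      rw [cast_L0 t i k, cast_L0T t j k, add_mul, mul_add, mul_add]),
      Finset.sum_add_distrib, Finset.sum_add_distrib, Finset.sum_add_distrib,
      sum_ind_ind, cast_L0]
    simp only [mul_ite, ite_mul, mul_zero, zero_mul, mul_one, one_mul,
      Finset.sum_ite_eq', Finset.mem_univ, if_true]
    rw [sum_delta_cond]
    rcases lt_trichotomy i j with h | h | h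
    · rw [if_neg (by intro e; subst e; exact lt_irrefl _ h),
        if_neg (not_le.mpr h), if_neg (not_le.mpr h),
        if_neg (by intro e; subst e; exact lt_irrefl _ h), if_neg (not_le.mpr h)]
      have hz : (i : ℕ) + 1 - (j : ℕ) = 0 := by
        have := Fin.lt_def.mp h; omega
      rw [hz]
      simp
    · subst h
      simp only [eq_self_iff_true, le_refl, if_true]
      have h1 : (i : ℕ) + 1 - (i : ℕ) = 1 := by omega
      rw [h1]
      generalize ((i : ℕ) : ZMod 2) = x
      revert x; decide
    · rw [if_neg (by intro e; subst e; exact lt_irrefl _ h), if_pos h.le,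
        if_pos h.le, if_neg (by intro e; subst e; exact lt_irrefl _ h), if_pos h.le]
      have hj : (j : ℕ) ≤ (i : ℕ) + 1 := by
        have := Fin.lt_def.mp h; omega
      rw [Nat.cast_sub hj]
      push_cast
      generalize ((i : ℕ) : ZMod 2) = x
      generalize ((j : ℕ) : ZMod 2) = y
      revert x y; decide
  · intro i j
    apply hi2
    have hN : (N + (1 : Matrix (Fin t) (Fin t) ℤ)) i j
        = 1 + (if i = j then 1 else 0) := by
      simp [N, Matrix.one_apply]
    rw [hN]
    simp only [Matrix.add_apply, Matrix.transpose_apply, L0, Matrix.of_apply]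
    rcases lt_trichotomy i j with h | h | h
    · rw [if_neg (by intro e; subst e; exact lt_irrefl _ h), if_pos h,
        if_neg (by intro e; subst e; exact lt_irrefl _ h),
        if_neg (not_lt.mpr h.le),
        if_neg (by intro e; subst e; exact lt_irrefl _ h)]
    · subst h
      simp only [eq_self_iff_true, le_refl, if_true]
      push_cast
      generalize ((i : ℕ) : ZMod 2) = x
      revert x; decide
    · rw [if_neg (by intro e; subst e; exact lt_irrefl _ h),
        if_neg (not_lt.mpr h.le),
        if_neg (by intro e; subst e; exact lt_irrefl _ h), if_pos h,
        if_neg (by intro e; subst e; exact lt_irrefl _ h)]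
      decide
  · intro i j
    apply hi2
    have hR : (((t : ℤ) - 1) • N) i j = (t : ℤ) - 1 := by
      simp [N, Matrix.smul_apply]
    rw [hR, Matrix.mul_apply]
    push_cast
    rw [Finset.sum_congr rfl (fun k _ => by
      rw [Matrix.transpose_apply, cast_L0T t i k, cast_L0T t j k, add_mul, mul_add, mul_add]),
      Finset.sum_add_distrib, Finset.sum_add_distrib, Finset.sum_add_distrib,
      sum_ind_ind']
    simp only [mul_ite, ite_mul, mul_zero, zero_mul, mul_one, one_mul,
      Finset.sum_ite_eq', Finset.mem_univ, if_true]
    rw [sum_delta_cond]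
    have hit : (i : ℕ) < t := i.isLt
    have hjt : (j : ℕ) < t := j.isLt
    rcases lt_trichotomy i j with h | h | h
    · have hm : max (i : ℕ) (j : ℕ) = (j : ℕ) := by
        have := Fin.lt_def.mp h; omega
      rw [if_neg (by intro e; subst e; exact lt_irrefl _ h),
        if_neg (not_le.mpr h), if_pos h.le, hm, Nat.cast_sub hjt.le]
      push_cast
      generalize ((j : ℕ) : ZMod 2) = y
      generalize ((t : ℕ) : ZMod 2) = z
      revert y z; decide
    · subst h
      simp only [eq_self_iff_true, le_refl, if_true]
      rw [max_self, Nat.cast_sub hit.le]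
      push_cast
      generalize ((i : ℕ) : ZMod 2) = x
      generalize ((t : ℕ) : ZMod 2) = z
      revert x z; decide
    · have hm : max (i : ℕ) (j : ℕ) = (i : ℕ) := by
        have := Fin.lt_def.mp h; omega
      rw [if_neg (by intro e; subst e; exact lt_irrefl _ h), if_pos h.le,
        if_neg (not_le.mpr h), hm, Nat.cast_sub hit.le]
      push_cast
      generalize ((i : ℕ) : ZMod 2) = x
      generalize ((t : ℕ) : ZMod 2) = z
      revert x z; decide
end
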